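/- Typed terms preserve inner products (one variable): given a valid typing judgment Δ, x:♯A ⊢ s⃗ : C, a substitution σ ∈ ⟦Δ⟧ and value distributions u⃗₁, u⃗₂ ∈ ⟦♯A⟧, there exist value distributions w⃗₁, w⃗₂ ∈ ⟦C⟧ such that s⃗⟨σ, x:=u⃗₁⟩ ≻≻ w⃗₁, s⃗⟨σ, x:=u⃗₂⟩ ≻≻ w⃗₂ and ⟨w⃗₁|w⃗₂⟩ = ⟨u⃗₁|u⃗₂⟩. -/

import Mathlib

namespace LinAlg

/-! ### Syntax: pure values, pure terms, term distributions -/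

mutual
inductive Val : Type where
  | var : ℕ → Val
  | lam : ℕ → Distr → Val
  | star : Val
  | pair : Val → Val → Val
  | inl : Val → Val
  | inr : Val → Val
inductive Term : Type where
  | val : Val → Term
  | app : Term → Term → Term
  | seq : Term → Distr → Term
  | letp : ℕ → ℕ → Term → Distr → Term
  | matc : Term → ℕ → Distr → ℕ → Distr → Term
inductive Distr : Type where
  | zero : Distr
  | single : Term → Distr
  | add : Distr → Distr → Distr
  | smul : ℂ → Distr → Distr
end

noncomputable instance : DecidableEq Val := fun _ _ => Classical.dec _
noncomputable instance : DecidableEq Term := fun _ _ => Classical.dec _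
noncomputable instance : DecidableEq Distr := fun _ _ => Classical.dec _

/-! ### The shallow congruence ≡ on term distributions -/

inductive Cong : Distr → Distr → Prop where
  | addZero (d : Distr) : Cong (d.add .zero) d
  | oneSmul (d : Distr) : Cong (Distr.smul 1 d) d
  | smulSmul (a b : ℂ) (d : Distr) : Cong (Distr.smul a (Distr.smul b d)) (Distr.smul (a * b) d)
  | addComm (d₁ d₂ : Distr) : Cong (d₁.add d₂) (d₂.add d₁)
  | addAssoc (d₁ d₂ d₃ : Distr) : Cong ((d₁.add d₂).add d₃) (d₁.add (d₂.add d₃))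
  | smulDistrib (a b : ℂ) (d : Distr) : Cong (Distr.smul (a + b) d) ((Distr.smul a d).add (Distr.smul b d))
  | smulAdd (a : ℂ) (d₁ d₂ : Distr) : Cong (Distr.smul a (d₁.add d₂)) ((Distr.smul a d₁).add (Distr.smul a d₂))
  | refl (d : Distr) : Cong d d
  | symm {d₁ d₂ : Distr} : Cong d₁ d₂ → Cong d₂ d₁
  | trans {d₁ d₂ d₃ : Distr} : Cong d₁ d₂ → Cong d₂ d₃ → Cong d₁ d₃
  | addCongr {d₁ d₁' d₂ d₂' : Distr} : Cong d₁ d₁' → Cong d₂ d₂' → Cong (d₁.add d₂) (d₁'.add d₂')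
  | smulCongr (a : ℂ) {d d' : Distr} : Cong d d' → Cong (Distr.smul a d) (Distr.smul a d')

/-! ### Free variables -/

mutual
def fvV : Val → Finset ℕ
  | .var y => {y}
  | .lam y b => fvD b \ {y}
  | .star => ∅
  | .pair v₁ v₂ => fvV v₁ ∪ fvV v₂
  | .inl v => fvV v
  | .inr v => fvV v
def fvT : Term → Finset ℕ
  | .val v => fvV v
  | .app s t => fvT s ∪ fvT t
  | .seq t s => fvT t ∪ fvD s
  | .letp y z t s => fvT t ∪ (fvD s \ {y, z})
  | .matc t y s₁ z s₂ => fvT t ∪ (fvD s₁ \ {y}) ∪ (fvD s₂ \ {z})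
def fvD : Distr → Finset ℕ
  | .zero => ∅
  | .single t => fvT t
  | .add d₁ d₂ => fvD d₁ ∪ fvD d₂
  | .smul _ d => fvD d
end

/-! ### Pure substitution -/

mutual
def substV (x : ℕ) (w : Val) : Val → Val
  | .var y => if y = x then w else .var y
  | .lam y b => if y = x then .lam y b else .lam y (substD x w b)
  | .star => .star
  | .pair v₁ v₂ => .pair (substV x w v₁) (substV x w v₂)
  | .inl v => .inl (substV x w v)
  | .inr v => .inr (substV x w v)
def substT (x : ℕ) (w : Val) : Term → Term
  | .val v => .val (substV x w v)
  | .app s t => .app (substT x w s) (substT x w t)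
  | .seq t s => .seq (substT x w t) (substD x w s)
  | .letp y z t s =>
      .letp y z (substT x w t) (if y = x ∨ z = x then s else substD x w s)
  | .matc t y s₁ z s₂ =>
      .matc (substT x w t) y (if y = x then s₁ else substD x w s₁)
        z (if z = x then s₂ else substD x w s₂)
def substD (x : ℕ) (w : Val) : Distr → Distr
  | .zero => .zero
  | .single t => .single (substT x w t)
  | .add d₁ d₂ => .add (substD x w d₁) (substD x w d₂)
  | .smul a d => .smul a (substD x w d)
end

/-! ### Linear extensions of the syntactic constructs -/

def appTD (s : Term) : Distr → Distr
  | .zero => .zero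
  | .single t => .single (.app s t)
  | .add d₁ d₂ => .add (appTD s d₁) (appTD s d₂)
  | .smul a d => .smul a (appTD s d)

def appDV : Distr → Val → Distr
  | .zero, _ => .zero
  | .single t, v => .single (.app t (.val v))
  | .add d₁ d₂, v => .add (appDV d₁ v) (appDV d₂ v)
  | .smul a d, v => .smul a (appDV d v)

def seqD : Distr → Distr → Distr
  | .zero, _ => .zero
  | .single t, s => .single (.seq t s)
  | .add d₁ d₂, s => .add (seqD d₁ s) (seqD d₂ s)
  | .smul a d, s => .smul a (seqD d s)

def letpD (x y : ℕ) : Distr → Distr → Distr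
  | .zero, _ => .zero
  | .single t, s => .single (.letp x y t s)
  | .add d₁ d₂, s => .add (letpD x y d₁ s) (letpD x y d₂ s)
  | .smul a d, s => .smul a (letpD x y d s)

def matcD : Distr → ℕ → Distr → ℕ → Distr → Distr
  | .zero, _, _, _, _ => .zero
  | .single t, y, s₁, z, s₂ => .single (.matc t y s₁ z s₂)
  | .add d₁ d₂, y, s₁, z, s₂ => .add (matcD d₁ y s₁ z s₂) (matcD d₂ y s₁ z s₂)
  | .smul a d, y, s₁, z, s₂ => .smul a (matcD d y s₁ z s₂)

/-- Bilinear application of distributions:  (Σᵢ αᵢ·tᵢ)(Σⱼ βⱼ·sⱼ) = Σᵢⱼ αᵢβⱼ·(tᵢ sⱼ). -/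
def appD : Distr → Distr → Distr
  | .zero, _ => .zero
  | .single t, w => appTD t w
  | .add d₁ d₂, w => .add (appD d₁ w) (appD d₂ w)
  | .smul a d, w => .smul a (appD d w)

/-- Bilinear substitution  d⟨x := w⃗⟩ = Σⱼ βⱼ · d[x := wⱼ]  (recursion on the value
distribution w⃗; non-value summands are junk and are sent to 0⃗). -/
def bsubst (x : ℕ) (d : Distr) : Distr → Distr
  | .zero => .zero
  | .single (.val w) => substD x w d
  | .single _ => .zero
  | .add w₁ w₂ => .add (bsubst x d w₁) (bsubst x d w₂)
  | .smul a w => .smul a (bsubst x d w)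

/-! ### Evaluation -/

inductive Atom : Term → Distr → Prop where
  | beta (x : ℕ) (b : Distr) (v : Val) :
      Atom (.app (.val (.lam x b)) (.val v)) (substD x v b)
  | seqStar (s : Distr) : Atom (.seq (.val .star) s) s
  | letPair (x y : ℕ) (v w : Val) (s : Distr) :
      Atom (.letp x y (.val (.pair v w)) s) (substD y w (substD x v s))
  | matchInl (v : Val) (y : ℕ) (s₁ : Distr) (z : ℕ) (s₂ : Distr) :
      Atom (.matc (.val (.inl v)) y s₁ z s₂) (substD y v s₁)
  | matchInr (v : Val) (y : ℕ) (s₁ : Distr) (z : ℕ) (s₂ : Distr) :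
      Atom (.matc (.val (.inr v)) y s₁ z s₂) (substD z v s₂)
  | appR (s : Term) {t : Term} {d : Distr} : Atom t d → Atom (.app s t) (appTD s d)
  | appL (v : Val) {t : Term} {d : Distr} : Atom t d → Atom (.app t (.val v)) (appDV d v)
  | seqC (s : Distr) {t : Term} {d : Distr} : Atom t d → Atom (.seq t s) (seqD d s)
  | letC (x y : ℕ) (s : Distr) {t : Term} {d : Distr} :
      Atom t d → Atom (.letp x y t s) (letpD x y d s)
  | matcC (y : ℕ) (s₁ : Distr) (z : ℕ) (s₂ : Distr) {t : Term} {d : Distr} :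
      Atom t d → Atom (.matc t y s₁ z s₂) (matcD d y s₁ z s₂)

/-- One-step evaluation:  t⃗ ≻ t⃗′. -/
def Step (d d' : Distr) : Prop :=
  ∃ (a : ℂ) (s : Term) (s' r : Distr),
    Cong d (Distr.add (.smul a (.single s)) r) ∧
    Cong d' (Distr.add (.smul a s') r) ∧ Atom s s'

/-- Evaluation  t⃗ ≻≻ t⃗′:  reflexive-transitive closure of one-step evaluation. -/
def Eval : Distr → Distr → Prop := Relation.ReflTransGen Step

/-! ### Value distributions, inner product, norm -/

def IsValT : Term → Prop
  | .val _ => True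
  | _ => False

def IsValD : Distr → Prop
  | .zero => True
  | .single t => IsValT t
  | .add d₁ d₂ => IsValD d₁ ∧ IsValD d₂
  | .smul _ d => IsValD d

/-- The set of closed value distributions. -/
def ClosedValD : Set Distr := {d | IsValD d ∧ fvD d = ∅}

/-- Total coefficient of the pure term `t` in the distribution `d`. -/
noncomputable def coeff : Distr → Term → ℂ
  | .zero, _ => 0
  | .single s, t => if s = t then 1 else 0
  | .add d₁ d₂, t => coeff d₁ t + coeff d₂ t
  | .smul a d, t => a * coeff d t

/-- The domain of a distribution (all pure terms occurring in it, even with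
coefficient 0). -/
noncomputable def domD : Distr → Finset Term
  | .zero => ∅
  | .single t => {t}
  | .add d₁ d₂ => domD d₁ ∪ domD d₂
  | .smul _ d => domD d

/-- The inner product ⟨v⃗|w⃗⟩ on value distributions. -/
noncomputable def innerD (v w : Distr) : ℂ :=
  ∑ t ∈ domD v, (starRingEnd ℂ) (coeff v t) * coeff w t

/-- The pseudo-ℓ²-norm ‖v⃗‖. -/
noncomputable def normD (v : Distr) : ℝ := Real.sqrt (innerD v v).re

/-- The unit sphere S of closed value distributions of norm 1. -/
def Sphere : Set Distr := {d | d ∈ ClosedValD ∧ normD d = 1}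

/-- Span(X): weak linear combinations of elements of X (taken modulo ≡). -/
inductive Span (X : Set Distr) : Distr → Prop where
  | mem {d : Distr} : d ∈ X → Span X d
  | zero : Span X .zero
  | add {d₁ d₂ : Distr} : Span X d₁ → Span X d₂ → Span X (d₁.add d₂)
  | smul (a : ℂ) {d : Distr} : Span X d → Span X (Distr.smul a d)
  | congr {d d' : Distr} : Span X d → Cong d d' → Span X d'

/-! ### Realizability: unitary types -/

/-- t⃗ ⊩ A :  t⃗ evaluates to some vector of ⟦A⟧. -/
def Realizes (A : Set Distr) (t : Distr) : Prop := ∃ v ∈ A, Eval t v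

/-- |A| : the set of (closed) realizers of A. -/
def realizersOf (A : Set Distr) : Set Distr := {t | fvD t = ∅ ∧ Realizes A t}

/-! ### Type constructors -/

def UnitT : Set Distr := {Distr.single (.val .star)}

/-- ♭A : the basis of A. -/
def flatT (X : Set Distr) : Set Distr :=
  {e | ∃ d ∈ X, ∃ v : Val, (Term.val v) ∈ domD d ∧ e = Distr.single (.val v)}

/-- ♯A : the unitary span of A. -/
def sharpT (X : Set Distr) : Set Distr := {d | Span X d ∧ d ∈ Sphere}

/-- Linear extension of a value constructor. -/
def mapVD (f : Val → Val) : Distr → Distr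
  | .zero => .zero
  | .single (.val v) => .single (.val (f v))
  | .single t => .single t
  | .add d₁ d₂ => .add (mapVD f d₁) (mapVD f d₂)
  | .smul a d => .smul a (mapVD f d)

def inlD : Distr → Distr := mapVD Val.inl
def inrD : Distr → Distr := mapVD Val.inr

/-- Bilinear extension of pairing. -/
def pairD : Distr → Distr → Distr
  | .zero, _ => .zero
  | .single (.val v), w => mapVD (Val.pair v) w
  | .single t, _ => .single t
  | .add d₁ d₂, w => .add (pairD d₁ w) (pairD d₂ w)
  | .smul a d, w => .smul a (pairD d w)

/-- A + B (simple sum). -/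
def plusT (A B : Set Distr) : Set Distr :=
  {d | (∃ v ∈ A, d = inlD v) ∨ (∃ w ∈ B, d = inrD w)}

/-- A × B (simple product). -/
def timesT (A B : Set Distr) : Set Distr :=
  {d | ∃ v ∈ A, ∃ w ∈ B, d = pairD v w}

/-- A → B (pure arrow). -/
def arrowT (A B : Set Distr) : Set Distr :=
  {d | ∃ (x : ℕ) (b : Distr), d = Distr.single (.val (.lam x b)) ∧ fvD d = ∅ ∧
      ∀ v ∈ A, Realizes B (bsubst x b v)}

/-- Σᵢ αᵢ · λx.t⃗ᵢ  ↦  Σᵢ αᵢ · t⃗ᵢ  (strips the λx in front of each summand). -/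
def stripLam (x : ℕ) : Distr → Distr
  | .zero => .zero
  | .single (.val (.lam y b)) => if y = x then b else .single (.val (.lam y b))
  | .single t => .single t
  | .add d₁ d₂ => .add (stripLam x d₁) (stripLam x d₂)
  | .smul a d => .smul a (stripLam x d)

/-- A ⇒ B (unitary arrow). -/
def uarrowT (A B : Set Distr) : Set Distr :=
  {d | d ∈ Sphere ∧ ∃ x : ℕ,
      (∀ t ∈ domD d, ∃ b : Distr, t = Term.val (.lam x b)) ∧
      ∀ v ∈ A, Realizes B (bsubst x (stripLam x d) v)}

/-! ### Booleans -/

def ttD : Distr := .single (.val (.inl .star))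
def ffD : Distr := .single (.val (.inr .star))

/-- 𝔹 = 𝕌 + 𝕌. -/
def BoolT : Set Distr := plusT UnitT UnitT

/-- ♯𝔹, the type of unitary Booleans. -/
def sharpBool : Set Distr := sharpT BoolT

/-- Boolean projection π : Span({tt,ff}) → ℂ². -/
noncomputable def piB (d : Distr) : ℂ × ℂ :=
  (coeff d (.val (.inl .star)), coeff d (.val (.inr .star)))

/-- t⃗ represents the operator F : ℂ² → ℂ². -/
def Represents (td : Distr) (F : ℂ × ℂ → ℂ × ℂ) : Prop :=
  ∀ v, Span BoolT v → ∃ w, Span BoolT w ∧ Eval (appD td v) w ∧ piB w = F (piB v)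

/-- Hermitian inner product on ℂ². -/
def hinner (u v : ℂ × ℂ) : ℂ :=
  (starRingEnd ℂ) u.1 * v.1 + (starRingEnd ℂ) u.2 * v.2

/-- A unitary operator on ℂ². -/
def IsUnitaryOp (F : ℂ × ℂ → ℂ × ℂ) : Prop :=
  ∀ u v : ℂ × ℂ, hinner (F u) (F v) = hinner u v

/-! ### Typing contexts, substitutions, judgments -/

abbrev Ctx := List (ℕ × Set Distr)
abbrev Subst := List (ℕ × Distr)

/-- Applying a substitution, one bilinear substitution at a time. -/
def applySub : Distr → Subst → Distr
  | d, [] => d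
  | d, (x, w) :: σ => applySub (bsubst x d w) σ

/-- σ ∈ ⟦Γ⟧. -/
def SubMem (σ : Subst) (Γ : Ctx) : Prop :=
  List.Forall₂ (fun p q => p.1 = q.1 ∧ p.2 ∈ q.2) σ Γ

def ctxDom (Γ : Ctx) : Set ℕ := {x | ∃ A, (x, A) ∈ Γ}

/-- dom♯(Γ): the variables of Γ whose type is not a pure-value type. -/
def ctxDomSharp (Γ : Ctx) : Set ℕ := {x | ∃ A, (x, A) ∈ Γ ∧ flatT A ≠ A}

/-- All the types of the context are unitary types (subsets of the sphere). -/
def CtxUnitary (Γ : Ctx) : Prop := ∀ p ∈ Γ, p.2 ⊆ Sphere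

/-- Validity of the typing judgment  Γ ⊢ t⃗ : A. -/
def ValidJ (Γ : Ctx) (t : Distr) (A : Set Distr) : Prop :=
  ctxDomSharp Γ ⊆ (fvD t : Set ℕ) ∧ (fvD t : Set ℕ) ⊆ ctxDom Γ ∧
  ∀ σ : Subst, SubMem σ Γ → Realizes A (applySub t σ)

/-- Validity of the orthogonality judgment  Γ | Δ₁ ⊢ t⃗₁ ⊥ Δ₂ ⊢ t⃗₂ : A. -/
def OrthoJ (Γ Δ₁ Δ₂ : Ctx) (t₁ t₂ : Distr) (A : Set Distr) : Prop :=
  ValidJ (Γ ++ Δ₁) t₁ A ∧ ValidJ (Γ ++ Δ₂) t₂ A ∧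
  ∀ σ σ₁ σ₂ : Subst, SubMem σ Γ → SubMem σ₁ Δ₁ → SubMem σ₂ Δ₂ →
    ∀ v₁ v₂ : Distr, v₁ ∈ ClosedValD → v₂ ∈ ClosedValD →
      Eval (applySub t₁ (σ ++ σ₁)) v₁ → Eval (applySub t₂ (σ ++ σ₂)) v₂ →
      innerD v₁ v₂ = 0

end LinAlg

namespace LinAlg

/-!
Evaluation is linear, and the coefficients of a value distribution reached from a term are
determined by the term (a big-step semantics on pure terms computes them). So the realizer map
`u ↦ s⃗⟨σ, x:=u⟩` sends the normalized combination `t·(u₁ + μ·u₂)`, which is again in `⟦♯A⟧`, to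
a unit vector of `C` with the same coefficients as `t·(w₁ + μ·w₂)`. Comparing norms gives
`Re (μ⟨w₁|w₂⟩) = Re (μ⟨u₁|u₂⟩)` for each `μ ∈ {±1, ±i}` with `u₁ + μ·u₂ ≠ 0`, and these four
cases determine `⟨w₁|w₂⟩`.
-/

open ComplexConjugate

def linExt (g : Term → ℂ) : Distr → ℂ
  | .zero => 0
  | .single t => g t
  | .add d₁ d₂ => linExt g d₁ + linExt g d₂
  | .smul a d => a * linExt g d

def Distr.linComb (a b : ℂ) (d₁ d₂ : Distr) : Distr :=
  (Distr.smul a d₁).add (Distr.smul b d₂)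

theorem coeff_eq_zero_of_notMem_domD :
    ∀ (d : Distr) {t : Term}, t ∉ domD d → coeff d t = 0
  | .zero, _, _ => rfl
  | .single s, t, h => by
      simp only [domD, Finset.mem_singleton] at h
      simp [coeff, Ne.symm h]
  | .add d₁ d₂, _, h => by
      simp only [domD, Finset.mem_union, not_or] at h
      simp [coeff, coeff_eq_zero_of_notMem_domD d₁ h.1, coeff_eq_zero_of_notMem_domD d₂ h.2]
  | .smul _ d, _, h => by
      simp [coeff, coeff_eq_zero_of_notMem_domD d h]

theorem linExt_eq_sum : ∀ (g : Term → ℂ) (d : Distr) {S : Finset Term}, domD d ⊆ S →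
    linExt g d = ∑ t ∈ S, coeff d t * g t
  | _, .zero, _, _ => by simp [linExt, coeff]
  | g, .single s, S, h => by
      rw [domD, Finset.singleton_subset_iff] at h
      simp [linExt, coeff, h]
  | g, .add d₁ d₂, S, h => by
      rw [domD, Finset.union_subset_iff] at h
      simp only [linExt, coeff, add_mul, Finset.sum_add_distrib,
        linExt_eq_sum g d₁ h.1, linExt_eq_sum g d₂ h.2]
  | g, .smul a d, S, h => by
      simp only [linExt, coeff, linExt_eq_sum g d h, Finset.mul_sum, mul_assoc]

theorem coeff_eq_linExt (d : Distr) (u : Term) :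
    coeff d u = linExt (fun t => if t = u then 1 else 0) d := by
  rw [linExt_eq_sum _ d subset_rfl]
  by_cases hu : u ∈ domD d
  · simp [hu]
  · simp [coeff_eq_zero_of_notMem_domD d hu]

theorem linExt_congr {g g' : Term → ℂ} :
    ∀ {d : Distr}, (∀ t ∈ domD d, g t = g' t) → linExt g d = linExt g' d
  | .zero, _ => rfl
  | .single _, h => h _ (Finset.mem_singleton_self _)
  | .add _ _, h => by
      simp only [domD, Finset.mem_union] at h
      simp only [linExt, linExt_congr fun t ht => h t (Or.inl ht),
        linExt_congr fun t ht => h t (Or.inr ht)]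
  | .smul _ d, h => congrArg _ (linExt_congr (d := d) h)

theorem Cong.linExt_eq {d d' : Distr} (h : Cong d d') (g : Term → ℂ) :
    linExt g d = linExt g d' := by
  induction h with
  | symm _ ih => exact ih.symm
  | trans _ _ ih₁ ih₂ => exact ih₁.trans ih₂
  | addCongr _ _ ih₁ ih₂ => simp only [linExt, ih₁, ih₂]
  | smulCongr a _ ih => simp only [linExt, ih]
  | _ => simp only [linExt] <;> ring

theorem Cong.domD_eq {d d' : Distr} (h : Cong d d') : domD d = domD d' := by
  induction h with
  | symm _ ih => exact ih.symm
  | trans _ _ ih₁ ih₂ => exact ih₁.trans ih₂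
  | addCongr _ _ ih₁ ih₂ => simp only [domD, ih₁, ih₂]
  | smulCongr a _ ih => simp only [domD, ih]
  | addComm => exact Finset.union_comm _ _
  | addAssoc => exact Finset.union_assoc _ _ _
  | _ => simp [domD]

theorem Atom.not_val {v : Val} {d : Distr} (h : Atom (.val v) d) : False := by cases h

theorem Atom.unique {t : Term} {d d' : Distr} (h : Atom t d) (h' : Atom t d') : d = d' := by
  induction h generalizing d' with
  | appR _ h ih => cases h' with
    | appR _ h' => rw [ih h']
    | _ => exact (Atom.not_val (by assumption)).elim
  | appL _ h ih => cases h' with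
    | appL _ h' => rw [ih h']
    | _ => exact (Atom.not_val (by assumption)).elim
  | seqC _ h ih => cases h' with
    | seqC _ h' => rw [ih h']
    | _ => exact (Atom.not_val (by assumption)).elim
  | letC _ _ _ h ih => cases h' with
    | letC _ _ _ h' => rw [ih h']
    | _ => exact (Atom.not_val (by assumption)).elim
  | matcC _ _ _ _ h ih => cases h' with
    | matcC _ _ _ _ h' => rw [ih h']
    | _ => exact (Atom.not_val (by assumption)).elim
  | _ => cases h' <;> first | rfl | exact (Atom.not_val (by assumption)).elim

/-- `BigStep t φ`: the pure term `t` evaluates to a value distribution with coefficients `φ`. -/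
inductive BigStep : Term → (Term → ℂ) → Prop where
  | val (v : Val) : BigStep (.val v) (fun u => if Term.val v = u then 1 else 0)
  | step {t : Term} {d : Distr} (f : Term → Term → ℂ) :
      Atom t d → (∀ t' ∈ domD d, BigStep t' (f t')) →
      BigStep t (fun u => linExt (fun t' => f t' u) d)

theorem BigStep.unique {t : Term} {φ ψ : Term → ℂ} (h : BigStep t φ) (h' : BigStep t ψ) :
    φ = ψ := by
  induction h generalizing ψ with
  | val v => cases h' with
    | val => rfl
    | step _ h _ => exact h.not_val.elim
  | step f ha _ ih => cases h' with
    | val => exact ha.not_val.elim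
    | step g ha' hg =>
        cases ha.unique ha'
        funext u
        exact linExt_congr fun t' ht' => congrFun (ih t' ht' (hg t' ht')) u

theorem exists_val_of_mem_domD :
    ∀ {d : Distr}, IsValD d → ∀ {t : Term}, t ∈ domD d → ∃ v : Val, t = .val v
  | .zero, _, _, ht => by simp [domD] at ht
  | .single (.val v), _, _, ht => ⟨v, Finset.mem_singleton.1 ht⟩
  | .add _ _, h, _, ht => (Finset.mem_union.1 ht).elim
      (exists_val_of_mem_domD h.1) (exists_val_of_mem_domD h.2)
  | .smul _ d, h, _, ht => exists_val_of_mem_domD (d := d) h ht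

theorem Eval.exists_bigStep {d v : Distr} (hev : Eval d v) (hv : IsValD v) :
    ∃ f : Term → Term → ℂ, (∀ t ∈ domD d, BigStep t (f t)) ∧
      ∀ u, coeff v u = linExt (fun t => f t u) d := by
  induction hev using Relation.ReflTransGen.head_induction_on with
  | refl =>
      refine ⟨fun t u => if t = u then 1 else 0, fun t ht => ?_, coeff_eq_linExt v⟩
      obtain ⟨w, rfl⟩ := exists_val_of_mem_domD hv ht
      exact BigStep.val w
  | @head d₀ d₁ hstep _ ih =>
      obtain ⟨a, s, s', r, hc, hc', hatom⟩ := hstep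
      obtain ⟨f', hf', hcoeff⟩ := ih
      have hdom₀ : domD d₀ = {s} ∪ domD r := by rw [hc.domD_eq]; rfl
      have hdom₁ : domD d₁ = domD s' ∪ domD r := by rw [hc'.domD_eq]; rfl
      set F : Term → ℂ := fun u => linExt (fun t => f' t u) s'
      have hF : BigStep s F :=
        .step f' hatom fun t ht => hf' t (by rw [hdom₁]; exact Finset.mem_union_left _ ht)
      have hr : ∀ t ∈ domD r, Function.update f' s F t = f' t := by
        intro t ht
        rcases eq_or_ne t s with rfl | hts
        · rw [Function.update_self]
          exact hF.unique (hf' t (by rw [hdom₁]; exact Finset.mem_union_right _ ht))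
        · exact Function.update_of_ne hts _ _
      refine ⟨Function.update f' s F, fun t ht => ?_, fun u => ?_⟩
      · rw [hdom₀, Finset.mem_union, Finset.mem_singleton] at ht
        rcases ht with rfl | ht
        · rwa [Function.update_self]
        · rw [hr t ht]
          exact hf' t (by rw [hdom₁]; exact Finset.mem_union_right _ ht)
      · rw [hcoeff, hc.linExt_eq, hc'.linExt_eq]
        simp only [linExt, Function.update_self]
        rw [linExt_congr fun t ht => congrFun (hr t ht) u]

theorem Eval.coeff_eq {d v₁ v₂ : Distr} (h₁ : Eval d v₁) (h₂ : Eval d v₂)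
    (hv₁ : IsValD v₁) (hv₂ : IsValD v₂) (u : Term) : coeff v₁ u = coeff v₂ u := by
  obtain ⟨f₁, hb₁, hc₁⟩ := h₁.exists_bigStep hv₁
  obtain ⟨f₂, hb₂, hc₂⟩ := h₂.exists_bigStep hv₂
  rw [hc₁, hc₂]
  exact linExt_congr fun t ht => congrFun ((hb₁ t ht).unique (hb₂ t ht)) u

theorem Step.smul {d d' : Distr} (a : ℂ) (h : Step d d') :
    Step (Distr.smul a d) (Distr.smul a d') := by
  obtain ⟨b, s, s', r, hc, hc', hat⟩ := h
  have distrib : ∀ {e c : Distr}, Cong e ((Distr.smul b c).add r) →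
      Cong (Distr.smul a e) ((Distr.smul (a * b) c).add (Distr.smul a r)) := fun h =>
    ((Cong.smulCongr a h).trans (Cong.smulAdd a _ _)).trans
      (Cong.addCongr (Cong.smulSmul a b _) (Cong.refl _))
  exact ⟨a * b, s, s', Distr.smul a r, distrib hc, distrib hc', hat⟩

theorem Step.add_right {d d' : Distr} (h : Step d d') (e : Distr) : Step (d.add e) (d'.add e) := by
  obtain ⟨b, s, s', r, hc, hc', hat⟩ := h
  exact ⟨b, s, s', r.add e,
    (Cong.addCongr hc (Cong.refl e)).trans (Cong.addAssoc _ _ _),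
    (Cong.addCongr hc' (Cong.refl e)).trans (Cong.addAssoc _ _ _), hat⟩

theorem Step.of_cong {d d' e e' : Distr} (h : Step d d') (he : Cong d e) (he' : Cong d' e') :
    Step e e' := by
  obtain ⟨b, s, s', r, hc, hc', hat⟩ := h
  exact ⟨b, s, s', r, he.symm.trans hc, he'.symm.trans hc', hat⟩

theorem Step.add_left {d d' : Distr} (h : Step d d') (e : Distr) : Step (e.add d) (e.add d') :=
  (h.add_right e).of_cong (Cong.addComm _ _) (Cong.addComm _ _)

theorem Eval.smul {d d' : Distr} (a : ℂ) (h : Eval d d') :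
    Eval (Distr.smul a d) (Distr.smul a d') :=
  Relation.ReflTransGen.lift (p := Step) (Distr.smul a) (fun _ _ => Step.smul a) _ _ h

theorem Eval.add_right {d d' : Distr} (h : Eval d d') (e : Distr) : Eval (d.add e) (d'.add e) :=
  Relation.ReflTransGen.lift (p := Step) (fun x : Distr => x.add e)
    (fun _ _ h => h.add_right e) _ _ h

theorem Eval.add_left {d d' : Distr} (h : Eval d d') (e : Distr) : Eval (e.add d) (e.add d') :=
  Relation.ReflTransGen.lift (p := Step) (Distr.add e) (fun _ _ h => h.add_left e) _ _ h

theorem Eval.linComb {d₁ d₂ e₁ e₂ : Distr} (a b : ℂ) (h₁ : Eval d₁ e₁) (h₂ : Eval d₂ e₂) :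
    Eval (d₁.linComb a b d₂) (e₁.linComb a b e₂) :=
  ((h₁.smul a).add_right _).trans ((h₂.smul b).add_left _)

theorem innerD_eq_sum {v : Distr} (w : Distr) {S : Finset Term} (h : domD v ⊆ S) :
    innerD v w = ∑ t ∈ S, conj (coeff v t) * coeff w t :=
  Finset.sum_subset h fun t _ ht => by rw [coeff_eq_zero_of_notMem_domD v ht, map_zero, zero_mul]

theorem innerD_eq_linExt (v w : Distr) : innerD v w = linExt (fun t => conj (coeff v t)) w := by
  rw [innerD_eq_sum w (Finset.subset_union_left (s₂ := domD w)),
    linExt_eq_sum _ w (Finset.subset_union_right (s₁ := domD v))]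
  simp only [mul_comm]

theorem innerD_linComb_right (v : Distr) (a b : ℂ) (w₁ w₂ : Distr) :
    innerD v (w₁.linComb a b w₂) = a * innerD v w₁ + b * innerD v w₂ := by
  simp only [innerD_eq_linExt v, Distr.linComb, linExt]

theorem conj_innerD (v w : Distr) : conj (innerD v w) = innerD w v := by
  rw [innerD_eq_sum w (Finset.subset_union_left (s₂ := domD w)),
    innerD_eq_sum v (Finset.subset_union_right (s₁ := domD v)), map_sum]
  simp only [map_mul, Complex.conj_conj, mul_comm]

theorem innerD_congr {v v' w w' : Distr} (hv : ∀ t, coeff v t = coeff v' t)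
    (hw : ∀ t, coeff w t = coeff w' t) : innerD v w = innerD v' w' := by
  rw [innerD_eq_sum w (Finset.subset_union_left (s₂ := domD v')),
    innerD_eq_sum w' (Finset.subset_union_right (s₁ := domD v))]
  simp only [hv, hw]

theorem innerD_self_eq_sum_normSq (v : Distr) :
    innerD v v = ((∑ t ∈ domD v, Complex.normSq (coeff v t) : ℝ) : ℂ) := by
  push_cast
  exact Finset.sum_congr rfl fun t _ => (Complex.normSq_eq_conj_mul_self).symm

theorem innerD_self_of_mem_sphere {v : Distr} (hv : v ∈ Sphere) : innerD v v = 1 := by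
  have hnorm : Real.sqrt (innerD v v).re = 1 := hv.2
  rw [innerD_self_eq_sum_normSq, Complex.ofReal_re, Real.sqrt_eq_one] at hnorm
  rw [innerD_self_eq_sum_normSq, hnorm, Complex.ofReal_one]

theorem innerD_linComb_self {v₁ v₂ : Distr} (h₁ : innerD v₁ v₁ = 1) (h₂ : innerD v₂ v₂ = 1)
    (t : ℝ) {μ : ℂ} (hμ : ‖μ‖ = 1) :
    innerD (v₁.linComb t (t * μ) v₂) (v₁.linComb t (t * μ) v₂)
      = ((t ^ 2 * (2 + 2 * (μ * innerD v₁ v₂).re) : ℝ) : ℂ) := by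
  set X := v₁.linComb t (t * μ) v₂
  have hμμ : conj μ * μ = 1 := by
    rw [mul_comm, Complex.mul_conj, Complex.normSq_eq_norm_sq, hμ]; simp
  rw [innerD_linComb_right, ← conj_innerD v₁ X, ← conj_innerD v₂ X, innerD_linComb_right,
    innerD_linComb_right, h₁, h₂, ← conj_innerD v₁ v₂]
  push_cast
  rw [Complex.re_eq_add_conj]
  simp only [map_add, map_mul, Complex.conj_ofReal, Complex.conj_conj, map_one]
  linear_combination (t : ℂ) ^ 2 * hμμ

theorem _root_.Complex.eq_of_forall_re_mul_eq {c d : ℂ}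
    (h : ∀ μ : ℂ, ‖μ‖ = 1 → 0 < 1 + (μ * c).re → (μ * d).re = (μ * c).re) : d = c := by
  apply Complex.ext
  · rcases lt_or_ge (-1) c.re with hc | hc
    · simpa using h 1 (by simp) (by rw [one_mul]; linarith)
    · simpa using h (-1) (by simp) (by rw [neg_one_mul, Complex.neg_re]; linarith)
  · rcases lt_or_ge c.im 1 with hc | hc
    · simpa using h Complex.I (by simp)
        (by rw [Complex.mul_re, Complex.I_re, Complex.I_im]; linarith)
    · simpa using h (-Complex.I) (by simp)
        (by rw [neg_mul, Complex.neg_re, Complex.mul_re, Complex.I_re, Complex.I_im]; linarith)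

theorem linComb_mem_sharpT {X : Set Distr} {u₁ u₂ : Distr} (h₁ : u₁ ∈ sharpT X)
    (h₂ : u₂ ∈ sharpT X) {a b : ℂ}
    (h : innerD (u₁.linComb a b u₂) (u₁.linComb a b u₂) = 1) : u₁.linComb a b u₂ ∈ sharpT X := by
  refine ⟨.add (.smul a h₁.1) (.smul b h₂.1), ⟨⟨h₁.2.1.1, h₂.2.1.1⟩, ?_⟩, ?_⟩
  · show fvD u₁ ∪ fvD u₂ = ∅
    rw [h₁.2.1.2, h₂.2.1.2, Finset.union_empty]
  · show Real.sqrt (innerD _ _).re = 1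
    rw [h, Complex.one_re, Real.sqrt_one]

section LinearRealizer

variable {A C : Set Distr} (hC : C ⊆ Sphere) {T : Distr → Distr}
  (hT : ∀ a b u₁ u₂, T (u₁.linComb a b u₂) = (T u₁).linComb a b (T u₂))
  (hreal : ∀ u ∈ sharpT A, Realizes C (T u))
  {u₁ u₂ w₁ w₂ : Distr} (hu₁ : u₁ ∈ sharpT A) (hu₂ : u₂ ∈ sharpT A)
  (hw₁ : w₁ ∈ C) (hw₂ : w₂ ∈ C) (he₁ : Eval (T u₁) w₁) (he₂ : Eval (T u₂) w₂)
include hC hT hreal hu₁ hu₂ hw₁ hw₂ he₁ he₂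

theorem innerD_linComb_self_eq_one_of_realizes {a b : ℂ}
    (h : innerD (u₁.linComb a b u₂) (u₁.linComb a b u₂) = 1) :
    innerD (w₁.linComb a b w₂) (w₁.linComb a b w₂) = 1 := by
  obtain ⟨w, hwC, hw⟩ := hreal _ (linComb_mem_sharpT hu₁ hu₂ h)
  have hW : Eval (T (u₁.linComb a b u₂)) (w₁.linComb a b w₂) :=
    hT a b u₁ u₂ ▸ he₁.linComb a b he₂
  have hcoeff := hW.coeff_eq hw ⟨(hC hw₁).1.1, (hC hw₂).1.1⟩ (hC hwC).1.1
  rw [innerD_congr hcoeff hcoeff, innerD_self_of_mem_sphere (hC hwC)]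

theorem innerD_eq_of_realizes : innerD w₁ w₂ = innerD u₁ u₂ := by
  have hu₁' := innerD_self_of_mem_sphere hu₁.2
  have hu₂' := innerD_self_of_mem_sphere hu₂.2
  have hw₁' := innerD_self_of_mem_sphere (hC hw₁)
  have hw₂' := innerD_self_of_mem_sphere (hC hw₂)
  refine Complex.eq_of_forall_re_mul_eq fun μ hμ hpos => ?_
  set g := 2 + 2 * (μ * innerD u₁ u₂).re
  have hg : 0 < g := by linarith
  set t := (Real.sqrt g)⁻¹
  have ht : t ^ 2 * g = 1 := by rw [inv_pow, Real.sq_sqrt hg.le, inv_mul_cancel₀ hg.ne']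
  have hw := innerD_linComb_self_eq_one_of_realizes hC hT hreal hu₁ hu₂ hw₁ hw₂ he₁ he₂
    (by rw [innerD_linComb_self hu₁' hu₂' t hμ, ht, Complex.ofReal_one])
  rw [innerD_linComb_self hw₁' hw₂' t hμ, ← Complex.ofReal_one, ← ht, Complex.ofReal_inj] at hw
  have ht0 : t ^ 2 ≠ 0 := by positivity
  linarith [mul_left_cancel₀ ht0 hw]

end LinearRealizer

theorem applySub_append_singleton (d : Distr) (σ : Subst) (x : ℕ) (u : Distr) :
    applySub d (σ ++ [(x, u)]) = bsubst x (applySub d σ) u := by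
  induction σ generalizing d with
  | nil => rfl
  | cons _ _ ih => exact ih _

theorem SubMem.append_singleton {σ : Subst} {Δ : Ctx} (h : SubMem σ Δ) {x : ℕ} {u : Distr}
    {A : Set Distr} (hu : u ∈ A) : SubMem (σ ++ [(x, u)]) (Δ ++ [(x, A)]) :=
  List.rel_append h (List.forall₂_cons.2 ⟨⟨rfl, hu⟩, .nil⟩)

/-- Typed terms preserve inner products (one variable). -/
theorem typed_preserve_inner (Δ : Ctx) (hΔ : CtxUnitary Δ)
    (hnodup : (Δ.map Prod.fst).Nodup)
    (A C : Set Distr) (hA : A ⊆ Sphere) (hC : C ⊆ Sphere)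
    (x : ℕ) (hx : x ∉ Δ.map Prod.fst) (s : Distr)
    (hjud : ValidJ (Δ ++ [(x, sharpT A)]) s C)
    (σ : Subst) (hσ : SubMem σ Δ)
    (u₁ u₂ : Distr) (hu₁ : u₁ ∈ sharpT A) (hu₂ : u₂ ∈ sharpT A) :
    ∃ w₁ w₂ : Distr, w₁ ∈ C ∧ w₂ ∈ C ∧
      Eval (applySub s (σ ++ [(x, u₁)])) w₁ ∧
      Eval (applySub s (σ ++ [(x, u₂)])) w₂ ∧
      innerD w₁ w₂ = innerD u₁ u₂ := by
  set T : Distr → Distr := fun u => applySub s (σ ++ [(x, u)])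
  have hT : ∀ a b u₁ u₂, T (u₁.linComb a b u₂) = (T u₁).linComb a b (T u₂) := by
    intro a b u₁ u₂
    simp only [T, applySub_append_singleton]
    rfl
  have hreal : ∀ u ∈ sharpT A, Realizes C (T u) := fun u hu =>
    hjud.2.2 _ (hσ.append_singleton hu)
  obtain ⟨w₁, hw₁, he₁⟩ := hreal u₁ hu₁
  obtain ⟨w₂, hw₂, he₂⟩ := hreal u₂ hu₂
  exact ⟨w₁, w₂, hw₁, hw₂, he₁, he₂,
    innerD_eq_of_realizes hC hT hreal hu₁ hu₂ hw₁ hw₂ he₁ he₂⟩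

end LinAlg
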